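/- arXiv:1009.1230 — 2 statements merged into one kernel-verified Lean document; each statement's English description precedes it below -/
import Mathlib

section
/- Let S be the ℤ^d-graded polynomial ring as above and c ∈ ℕ_+^d. Let α ∈ ℕ^d with α ≤ c componentwise, let a_1, a_2, …, a_{t+1} be monomials of ℤ^d-degree α and b_1, b_2, …, b_t monomials of ℤ^d-degree c − α. Then the element Σ_{σ∈S_{t+1}} sgn(σ)·a_{σ(t+1)}·[b_1·a_{σ(1)}, b_2·a_{σ(2)}, …, b_t·a_{σ(t)}] is a Koszul cycle, i.e., belongs to Z_t(m^c, S). -/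
/-!
The Koszul differential is a derivation, `d(e_x ∧ f) = u_x f - e_x ∧ d f`, so on a wedge of
generators it acts by contraction:
`d(e_{v_0} ∧ ⋯ ∧ e_{v_n}) = Σ_k (-1)^k u_{v_k} e_{v_0} ∧ ⋯ ∧ ê_{v_k} ∧ ⋯ ∧ e_{v_n}`.
In the differential of the symmetrized sum, the term of `σ` at position `k` has coefficient
`a_{σ(t+1)} · b_k a_{σ(k)}`, which is symmetric in `σ(k)` and `σ(t+1)`; it therefore cancels
against the term of `σ ∘ (k, t+1)`, whose sign is opposite.
-/

open Finset

section Koszul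

variable {R : Type} [CommRing R] {ι : Type} [Fintype ι] [LinearOrder ι]

/-- The Koszul differential on `⋀ F ⊗ M`, modelled as `Finset ι → M`, for the Koszul
complex of the family `u : ι → R` with coefficients in `M`. -/
noncomputable def kD (u : ι → R) (M : Type) [AddCommGroup M] [Module R M] :
    (Finset ι → M) →ₗ[R] (Finset ι → M) where
  toFun f := fun J => ∑ i ∈ Jᶜ, ((-1 : ℤ) ^ (J.filter (· < i)).card) • u i • f (insert i J)
  map_add' f g := by
    funext J
    simp [smul_add, Finset.sum_add_distrib]
  map_smul' r f := by
    funext J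
    simp only [Pi.smul_apply, RingHom.id_apply]
    rw [Finset.smul_sum]
    refine Finset.sum_congr rfl fun i _ => ?_
    rw [smul_comm (u i) r, smul_comm ((-1 : ℤ) ^ (J.filter (· < i)).card) r]

variable (u : ι → R) (M : Type) [AddCommGroup M] [Module R M]

/-- The homological degree `t` part `K_t` of the Koszul complex, i.e. the elements
supported on subsets of cardinality `t`. -/
def kSupp (t : ℕ) : Submodule R (Finset ι → M) where
  carrier := {f | ∀ J : Finset ι, J.card ≠ t → f J = 0}
  add_mem' := by
    intro f g hf hg J hJ
    simp [Pi.add_apply, hf J hJ, hg J hJ]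
  zero_mem' := by intro J hJ; rfl
  smul_mem' := by
    intro c f hf J hJ
    simp [Pi.smul_apply, hf J hJ]

/-- Koszul cycles `Z_t(u, M)`. -/
noncomputable def kZ (t : ℕ) : Submodule R (Finset ι → M) :=
  kSupp M t ⊓ LinearMap.ker (kD u M)

/-- Koszul boundaries `B_t(u, M)`. -/
noncomputable def kB (t : ℕ) : Submodule R (Finset ι → M) :=
  kSupp M t ⊓ Submodule.map (kD u M) (kSupp M (t + 1))

/-- The sign `σ(A,B) = (-1)^{#{(a,b) ∈ A×B : a > b}}`. -/
def ksign (A B : Finset ι) : ℤ := (-1) ^ ((A ×ˢ B).filter fun p => p.2 < p.1).card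

/-- The multiplication `K(u,R) ⊗ K(u,M) → K(u,M)` of the Koszul complex, viewed as a module
over the exterior algebra. -/
def kMul (a : Finset ι → R) (f : Finset ι → M) : Finset ι → M :=
  fun J => ∑ A ∈ J.powerset, ksign A (J \ A) • a A • f (J \ A)

/-- The identity element of the Koszul algebra `K(u,R)`. -/
def kOne : Finset ι → R := fun J => if J = ∅ then 1 else 0

/-- Iterated Koszul product of a list of elements of `K(u,R)`. -/
def kProd (l : List (Finset ι → R)) : Finset ι → R := l.foldr (kMul R) kOne

end Koszul

section Graded

variable (K : Type) [Field K]

/-- The component of internal degree `q` of a direct sum of copies of a graded module `M`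
shifted by the weights `w`: an element `f : β → M` is homogeneous of degree `q` iff
each coordinate `f b` is homogeneous of degree `q - w b`. -/
noncomputable def piComp {A : Type} [AddCommMonoid A] {β M : Type} [AddCommGroup M] [Module K M]
    (w : β → A) (ν : A → Submodule K M) (q : A) : Submodule K (β → M) :=
  Submodule.pi Set.univ fun b => ⨆ q' ∈ {q' : A | q' + w b = q}, ν q'

/-- The component of internal degree `q` of the Koszul complex of `u : ι → R`
(generators of internal degrees `w : ι → A`) with coefficients in a graded module with
components `ν`. -/
noncomputable def kComp {A : Type} [AddCommMonoid A] {ι M : Type} [AddCommGroup M] [Module K M]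
    (w : ι → A) (ν : A → Submodule K M) (q : A) : Submodule K (Finset ι → M) :=
  piComp K (fun J : Finset ι => ∑ i ∈ J, w i) ν q

end Graded

section Resolutions

variable (K : Type) [Field K] {R : Type} [CommRing R] [Algebra K R]

/-- A graded free resolution of the graded `R`-module `P` (graded by `ν : ℕ → Submodule K P`)
over the graded `K`-algebra `R` (graded by `𝒜`): free modules `B i → R` with homogeneous
bases of degrees `deg i`, with exact graded differentials. -/
structure GFR (𝒜 : ℕ → Submodule K R) (P : Type) [AddCommGroup P] [Module R P] [Module K P]
    (ν : ℕ → Submodule K P) where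
  B : ℕ → Type
  fin : ∀ i, Fintype (B i)
  deg : ∀ i, B i → ℕ
  aug : (B 0 → R) →ₗ[R] P
  d : ∀ i, (B (i + 1) → R) →ₗ[R] (B i → R)
  surj : Function.Surjective aug
  exact0 : LinearMap.ker aug = LinearMap.range (d 0)
  exact : ∀ i, LinearMap.ker (d i) = LinearMap.range (d (i + 1))
  graded_aug : ∀ q f, f ∈ piComp K (deg 0) 𝒜 q → aug f ∈ ν q
  graded_d : ∀ i q f, f ∈ piComp K (deg (i + 1)) 𝒜 q → d i f ∈ piComp K (deg i) 𝒜 q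

/-- A minimal graded free resolution: a graded free resolution whose differentials map into
`m·F`, where `m` is the irrelevant maximal ideal. -/
structure MinGFR (𝒜 : ℕ → Submodule K R) (P : Type) [AddCommGroup P] [Module R P] [Module K P]
    (ν : ℕ → Submodule K P) extends GFR K 𝒜 P ν where
  min0 : ∀ f, aug f = 0 → ∀ b, f b ∈ Ideal.span (𝒜 1 : Set R)
  mind : ∀ i f b, d i f b ∈ Ideal.span (𝒜 1 : Set R)

/-- `regLE K 𝒜 P ν r` says that the Castelnuovo–Mumford regularity of the graded module
`(P, ν)` over the graded algebra `(R, 𝒜)` is at most `r`: in any minimal graded free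
resolution, the generators in homological degree `i` have degrees at most `r + i`,
i.e. `t_i(P) - i ≤ r` for all `i`. -/
def regLE (𝒜 : ℕ → Submodule K R) (P : Type) [AddCommGroup P] [Module R P] [Module K P]
    (ν : ℕ → Submodule K P) (r : ℕ) : Prop :=
  ∀ res : MinGFR K 𝒜 P ν, ∀ i, ∀ b : res.B i, res.deg i b ≤ r + i

end Resolutions

section GradingHelpers

variable (K : Type) [Field K] {S : Type} [CommRing S] [Algebra K S]
variable {P : Type} [AddCommGroup P] [Module S P] [Module K P] [IsScalarTower K S P]
variable {A : Type}

/-- The grading induced on a submodule of a graded module. -/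
noncomputable def subGrading (p : Submodule S P) (ν : A → Submodule K P) :
    A → Submodule K ↥p :=
  fun q => Submodule.comap ((p.subtype).restrictScalars K) (ν q)

/-- The grading induced on a quotient of a graded module. -/
noncomputable def quotGrading (p : Submodule S P) (ν : A → Submodule K P) :
    A → Submodule K (P ⧸ p) :=
  fun q => Submodule.map ((p.mkQ).restrictScalars K) (ν q)

end GradingHelpers

/-- The basis element `[u_x] = e_x` of `K_1` of the Koszul complex, corresponding to the
generator indexed by `x`. -/
def kGen {R : Type} [CommRing R] {ι : Type} [Fintype ι] [LinearOrder ι] (x : ι) :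
    Finset ι → R := fun J => if J = {x} then 1 else 0

open Equiv

theorem Equiv.Perm.sum_sign_smul_eq_zero_of_mul_swap {α M : Type*} [Fintype α] [DecidableEq α]
    [AddCommGroup M] (f : Perm α → M) {i j : α} (hij : i ≠ j)
    (hf : ∀ σ, f (σ * swap i j) = f σ) :
    ∑ σ : Perm α, (Perm.sign σ : ℤ) • f σ = 0 :=
  sum_involution (fun σ _ => σ * swap i j)
    (fun σ _ => by simp [hf, Perm.sign_mul, Perm.sign_swap hij])
    (fun σ _ _ h => hij (by simpa using congrArg (· j) (mul_eq_left.mp h)))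
    (fun σ _ => mem_univ _) (fun σ _ => by simp [mul_assoc])

section

variable {ι : Type} [LinearOrder ι]

def kSgn (J : Finset ι) (i : ι) : ℤ := (-1) ^ #(J.filter (· < i))

lemma kSgn_mul_self (J : Finset ι) (i : ι) : kSgn J i * kSgn J i = 1 := by
  rw [kSgn, ← mul_pow]; simp

lemma kSgn_insert_self (K : Finset ι) (i : ι) : kSgn (insert i K) i = kSgn K i := by
  simp [kSgn, filter_insert]

lemma kSgn_insert_of_notMem {K : Finset ι} {x : ι} (hx : x ∉ K) (i : ι) :
    kSgn (insert x K) i = if x < i then -kSgn K i else kSgn K i := by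
  unfold kSgn
  rw [filter_insert]
  split_ifs
  · rw [card_insert_of_notMem (by simp [hx]), pow_succ, mul_neg_one]
  · rfl

-- `e_x ∧ e_i = -e_i ∧ e_x`
lemma kSgn_insert_mul_kSgn_insert {K : Finset ι} {x i : ι} (hx : x ∉ K) (hi : i ∉ K)
    (hxi : x ≠ i) : kSgn (insert x K) i * kSgn (insert i K) x = -(kSgn K x * kSgn K i) := by
  rw [kSgn_insert_of_notMem hx, kSgn_insert_of_notMem hi]
  rcases hxi.lt_or_gt with h | h <;> simp [h, h.not_gt, mul_comm]

variable {R : Type} [CommRing R] (M : Type) [AddCommGroup M] [Module R M]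

variable (R) in
def kGenMul (x : ι) : (Finset ι → M) →ₗ[R] (Finset ι → M) where
  toFun f J := if x ∈ J then kSgn J x • f (J.erase x) else 0
  map_add' f g := by ext J; by_cases hx : x ∈ J <;> simp [hx]
  map_smul' r f := by ext J; by_cases hx : x ∈ J <;> simp [hx, smul_comm r]

lemma kGenMul_apply (x : ι) (f : Finset ι → M) (J : Finset ι) :
    kGenMul R M x f J = if x ∈ J then kSgn J x • f (J.erase x) else 0 := rfl

lemma kOne_mem_kSupp : (kOne : Finset ι → R) ∈ kSupp (R := R) R 0 := by
  intro J hJ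
  exact if_neg (by rintro rfl; exact hJ rfl)

lemma kGenMul_mem_kSupp {n : ℕ} {f : Finset ι → M}
    (hf : f ∈ kSupp (R := R) M n) (x : ι) : kGenMul R M x f ∈ kSupp (R := R) M (n + 1) := by
  intro J hJ
  rw [kGenMul_apply]
  split_ifs with hx
  · rw [hf _ fun h => hJ (by rw [← card_erase_add_one hx, h]), smul_zero]
  · rfl

end

section

variable {R : Type} [CommRing R] {ι : Type} [Fintype ι] [LinearOrder ι]
variable (u : ι → R) (M : Type) [AddCommGroup M] [Module R M]

lemma kD_apply (f : Finset ι → M) (J : Finset ι) :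
    kD u M f J = ∑ i ∈ Jᶜ, kSgn J i • u i • f (insert i J) := rfl

lemma kMul_kGen (x : ι) (f : Finset ι → M) : kMul M (kGen (R := R) x) f = kGenMul R M x f := by
  ext J
  rw [kMul, kGenMul_apply]
  split_ifs with hx
  · rw [sum_eq_single {x}]
    · simp [kGen, ksign, kSgn, singleton_product, filter_map, sdiff_singleton_eq_erase,
        filter_erase]
    · intro A _ hA
      simp [kGen, hA]
    · simp [hx]
  · refine sum_eq_zero fun A hA => ?_
    have : A ≠ {x} := by rintro rfl; simp_all
    simp [kGen, this]

lemma kD_kGenMul_apply_of_notMem (x : ι) (f : Finset ι → M) {J : Finset ι} (hx : x ∉ J) :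
    kD u M (kGenMul R M x f) J = u x • f J := by
  rw [kD_apply, sum_eq_single x]
  · rw [kGenMul_apply, if_pos (mem_insert_self x J), kSgn_insert_self, erase_insert hx,
      smul_comm (u x), smul_smul, kSgn_mul_self, one_smul]
  · intro i _ hix
    rw [kGenMul_apply, if_neg (by simp [hx, Ne.symm hix]), smul_zero, smul_zero]
  · simp [hx]

lemma kD_kGenMul_apply_insert (x : ι) (f : Finset ι → M) {K : Finset ι} (hx : x ∉ K) :
    kD u M (kGenMul R M x f) (insert x K) =
      u x • f (insert x K) - kSgn K x • kD u M f K := by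
  rw [kD_apply, kD_apply, compl_insert, ← add_sum_erase Kᶜ _ (mem_compl.2 hx), smul_add,
    smul_smul, kSgn_mul_self, one_smul, sub_add_cancel_left, smul_sum, ← sum_neg_distrib]
  refine sum_congr rfl fun i hi => ?_
  obtain ⟨hix, hiK⟩ : i ≠ x ∧ i ∉ K := by simpa using hi
  rw [kGenMul_apply, if_pos (by simp), Finset.insert_comm, kSgn_insert_self,
    erase_insert (by simp [hx, hix.symm]), smul_comm (u i), smul_smul,
    kSgn_insert_mul_kSgn_insert hx hiK hix.symm, neg_smul, smul_smul]

theorem kD_kGenMul (x : ι) (f : Finset ι → M) :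
    kD u M (kGenMul R M x f) = u x • f - kGenMul R M x (kD u M f) := by
  ext J
  by_cases hx : x ∈ J
  · rw [← insert_erase hx, kD_kGenMul_apply_insert u M x f (notMem_erase x J)]
    simp [kGenMul_apply, kSgn_insert_self]
  · simp [kD_kGenMul_apply_of_notMem u M x f hx, kGenMul_apply, hx]

variable (R) in
def kWedge {n : ℕ} (v : Fin n → ι) : Finset ι → R := kProd (List.ofFn fun k => kGen (v k))

lemma kWedge_zero (v : Fin 0 → ι) : kWedge R v = kOne := by
  simp [kWedge, kProd]

lemma kWedge_succ {n : ℕ} (v : Fin (n + 1) → ι) :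
    kWedge R v = kGenMul R R (v 0) (kWedge R (Fin.tail v)) := by
  rw [kWedge, List.ofFn_succ, kProd, List.foldr_cons, kMul_kGen]
  rfl

lemma kWedge_mem_kSupp : ∀ {n : ℕ} (v : Fin n → ι), kWedge R v ∈ kSupp (R := R) R n
  | 0, v => by rw [kWedge_zero]; exact kOne_mem_kSupp
  | _ + 1, v => by
    rw [kWedge_succ]
    exact kGenMul_mem_kSupp R (kWedge_mem_kSupp (Fin.tail v)) (v 0)

lemma kD_kOne : kD u R (kOne : Finset ι → R) = 0 := by
  ext J
  simp [kD_apply, kOne]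

lemma kGenMul_kWedge_removeNth_tail {n : ℕ} (v : Fin (n + 2) → ι) (k : Fin (n + 1)) :
    kGenMul R R (v 0) (kWedge R (Fin.removeNth k (Fin.tail v))) =
      kWedge R (Fin.removeNth k.succ v) := by
  rw [kWedge_succ (Fin.removeNth k.succ v)]
  congr 2
  ext j
  simp [Fin.tail, Fin.removeNth, Fin.succ_succAbove_succ]

theorem kD_kWedge : ∀ {n : ℕ} (v : Fin (n + 1) → ι),
    kD u R (kWedge R v) =
      ∑ k : Fin (n + 1), (-1 : ℤ) ^ (k : ℕ) • u (v k) • kWedge R (Fin.removeNth k v)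
  | 0, v => by
    simp [kWedge_succ v, kD_kGenMul, kWedge_zero, kD_kOne]
  | n + 1, v => by
    rw [kWedge_succ, kD_kGenMul, kD_kWedge (Fin.tail v), map_sum, sub_eq_add_neg,
      ← sum_neg_distrib, Fin.sum_univ_succ (n := n + 1), Fin.removeNth_zero]
    simp only [map_zsmul, map_smul, kGenMul_kWedge_removeNth_tail, Fin.val_zero, pow_zero,
      one_smul, Fin.val_succ, pow_succ, mul_neg_one, neg_smul, Fin.tail]

theorem kD_sum_sign_smul_kWedge_eq_zero (t : ℕ) (a : Fin (t + 1) → R)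
    (idx : Fin t → Fin (t + 1) → ι)
    (hsym : ∀ k l l', a l * u (idx k l') = a l' * u (idx k l)) :
    kD u R (∑ σ : Perm (Fin (t + 1)), (Perm.sign σ : ℤ) • a (σ (Fin.last t)) •
      kWedge R fun k => idx k (σ k.castSucc)) = 0 := by
  rw [map_sum]
  cases t with
  | zero => simp [kWedge_zero, kD_kOne]
  | succ n =>
    simp_rw [map_zsmul, map_smul, kD_kWedge, smul_sum]
    rw [sum_comm]
    refine sum_eq_zero fun k _ => ?_
    have hk : k.castSucc ≠ Fin.last (n + 1) := (Fin.castSucc_lt_last k).ne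
    refine Perm.sum_sign_smul_eq_zero_of_mul_swap _ hk fun σ => ?_
    have hW : Fin.removeNth k (fun j => idx j (σ (swap k.castSucc (Fin.last _) j.castSucc))) =
        Fin.removeNth k fun j => idx j (σ j.castSucc) := by
      ext j
      simp [Fin.removeNth, swap_apply_of_ne_of_ne, Fin.succAbove_ne k j,
        (Fin.castSucc_lt_last _).ne]
    simp only [Perm.mul_apply, hW, swap_apply_left, swap_apply_right]
    rw [smul_comm (a _) ((-1 : ℤ) ^ (k : ℕ)), smul_comm (a _) ((-1 : ℤ) ^ (k : ℕ)),
      smul_smul (a _), smul_smul (a _), hsym]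

end

open MvPolynomial in
theorem symmetrized_koszul_cycles_general (K : Type) [Field K]
    (d : ℕ) (mdim : Fin (d + 1) → ℕ)
    (ι : Type) [Fintype ι] [LinearOrder ι]
    (u : ι → MvPolynomial ((i : Fin (d + 1)) × Fin (mdim i)) K)
    (t : ℕ)
    -- monomials `a_1, …, a_{t+1}` of multidegree `α`
    (a : Fin (t + 1) → (((i : Fin (d + 1)) × Fin (mdim i)) →₀ ℕ))
    -- monomials `b_1, …, b_t` of multidegree `c − α`
    (b : Fin t → (((i : Fin (d + 1)) × Fin (mdim i)) →₀ ℕ))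
    -- `idx k l` is the generator of `m^c` equal to the monomial `b_k · a_l`
    (idx : Fin t → Fin (t + 1) → ι)
    (hidx : ∀ k l, u (idx k l) = monomial (b k + a l) 1) :
    (∑ σ : Equiv.Perm (Fin (t + 1)), (Equiv.Perm.sign σ : ℤ) •
        (monomial (a (σ (Fin.last t))) (1 : K)) •
          kProd (List.ofFn fun k : Fin t => kGen (idx k (σ k.castSucc))))
      ∈ kZ u (MvPolynomial ((i : Fin (d + 1)) × Fin (mdim i)) K) t := by
  refine Submodule.mem_inf.2 ⟨Submodule.sum_mem _ fun σ _ => ?_, ?_⟩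
  · exact Submodule.smul_of_tower_mem _ _ (Submodule.smul_mem _ _ (kWedge_mem_kSupp _))
  · refine kD_sum_sign_smul_kWedge_eq_zero u t (fun l => monomial (a l) 1) idx fun k l l' => ?_
    rw [hidx, hidx, monomial_mul, monomial_mul]
    congr 1
    ac_rfl

open MvPolynomial in
/-- **Symmetrized Koszul cycles (multigraded version of \[BCR, Lemma 3.4\]).**
Let `α ≤ c` componentwise, let `a_1, …, a_{t+1}` be monomials of multidegree `α` and
`b_1, …, b_t` monomials of multidegree `c − α`.  Then
`Σ_{σ ∈ S_{t+1}} sgn(σ) a_{σ(t+1)} [b_1 a_{σ(1)}, …, b_t a_{σ(t)}]` is a Koszul cycle in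
`Z_t(m^c, S)`, where the Koszul complex is taken on the family `u` of monomial generators
of `m^c`. -/
theorem symmetrized_koszul_cycles (K : Type) [Field K]
    (d : ℕ) (mdim : Fin (d + 1) → ℕ) (c : Fin (d + 1) → ℕ)
    (hm : ∀ i, 0 < mdim i) (hc : ∀ i, 0 < c i)
    (ι : Type) [Fintype ι] [LinearOrder ι]
    (u : ι → MvPolynomial ((i : Fin (d + 1)) × Fin (mdim i)) K)
    -- `u` enumerates the multidegree-`c` monomials, i.e. the monomial generators of `m^c`
    (hu : ∀ i, ∃ m : ((i : Fin (d + 1)) × Fin (mdim i)) →₀ ℕ,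
      Finsupp.weight (fun x => Pi.single x.1 1 : _ → Fin (d + 1) → ℕ) m = c ∧
        u i = monomial m 1)
    (hu' : ∀ m : ((i : Fin (d + 1)) × Fin (mdim i)) →₀ ℕ,
      Finsupp.weight (fun x => Pi.single x.1 1 : _ → Fin (d + 1) → ℕ) m = c →
        ∃! i, u i = monomial m 1)
    (t : ℕ) (α : Fin (d + 1) → ℕ) (hα : ∀ s, α s ≤ c s)
    -- monomials `a_1, …, a_{t+1}` of multidegree `α`
    (a : Fin (t + 1) → (((i : Fin (d + 1)) × Fin (mdim i)) →₀ ℕ))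
    (ha : ∀ k, Finsupp.weight (fun x => Pi.single x.1 1 : _ → Fin (d + 1) → ℕ) (a k) = α)
    -- monomials `b_1, …, b_t` of multidegree `c − α`
    (b : Fin t → (((i : Fin (d + 1)) × Fin (mdim i)) →₀ ℕ))
    (hb : ∀ k,
      Finsupp.weight (fun x => Pi.single x.1 1 : _ → Fin (d + 1) → ℕ) (b k) + α = c)
    -- `idx k l` is the generator of `m^c` equal to the monomial `b_k · a_l`
    (idx : Fin t → Fin (t + 1) → ι)
    (hidx : ∀ k l, u (idx k l) = monomial (b k + a l) 1) :
    (∑ σ : Equiv.Perm (Fin (t + 1)), (Equiv.Perm.sign σ : ℤ) •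
        (monomial (a (σ (Fin.last t))) (1 : K)) •
          kProd (List.ofFn fun k : Fin t => kGen (idx k (σ k.castSucc))))
      ∈ kZ u (MvPolynomial ((i : Fin (d + 1)) × Fin (mdim i)) K) t :=
  symmetrized_koszul_cycles_general K d mdim ι u t a b idx hidx
end

section
/- Let R be a commutative ring, I ⊆ R an ideal and M a finitely generated R-module. Then I + Ann(M) ⊆ Ann(M/IM) ⊆ √(I + Ann(M)), where Ann denotes the annihilator and √ the radical of an ideal. -/
open PrimeSpectrum

namespace Module

variable {R : Type*} [CommRing R] (I : Ideal R) (M : Type*) [AddCommGroup M] [Module R M]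

theorem sup_annihilator_le_annihilator_quotient_smul_top :
    I ⊔ annihilator R M ≤ annihilator R (M ⧸ (I • ⊤ : Submodule R M)) := by
  refine sup_le (fun r hr ↦ ?_) ((Submodule.mkQ _).annihilator_le_of_surjective
    (Submodule.mkQ_surjective _))
  rw [Submodule.annihilator_quotient, Submodule.mem_colon]
  exact fun _ _ ↦ Submodule.smul_mem_smul hr Submodule.mem_top

/-- Both ideals cut out `Supp(M/IM) = Supp(M) ∩ V(I)` in `Spec R`. -/
theorem radical_annihilator_quotient_smul_top [Module.Finite R M] :
    (annihilator R (M ⧸ (I • ⊤ : Submodule R M))).radical = (I ⊔ annihilator R M).radical := by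
  rw [← zeroLocus_eq_iff, ← support_eq_zeroLocus, support_quotient, support_eq_zeroLocus,
    zeroLocus_sup, Set.inter_comm]

end Module

/-- For a commutative ring `R`, an ideal `I ⊆ R` and a finitely generated `R`-module `M`,
one has `I + Ann(M) ⊆ Ann(M/IM) ⊆ √(I + Ann(M))`. -/
theorem ann_quotient_bounds (R : Type) [CommRing R] (I : Ideal R)
    (M : Type) [AddCommGroup M] [Module R M] [Module.Finite R M] :
    I + Module.annihilator R M ≤
        Module.annihilator R (M ⧸ (I • (⊤ : Submodule R M))) ∧
      Module.annihilator R (M ⧸ (I • (⊤ : Submodule R M))) ≤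
        (I + Module.annihilator R M).radical :=
  ⟨Module.sup_annihilator_le_annihilator_quotient_smul_top I M,
    Ideal.le_radical.trans (Module.radical_annihilator_quotient_smul_top I M).le⟩
end
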